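/- arXiv:2112.08483 — 3 statements merged into one kernel-verified Lean document; each statement's English description precedes it below -/
import Mathlib

section
/- The elements ʲPᵢ = (eʲ)P(eᵢ) of the Clifford algebra satisfy the matrix-unit relation (ʲPᵢ)(ᵏPₗ) = δᵢᵏ (ʲPₗ) for all indices i,j,k,l ∈ {1,…,n}. Consequently the elements ʲPᵢ are linearly independent. -/
/-!
Each `N̄ₖ = eₖeᵏ` is idempotent (`eᵏeₖ = 1 - eₖeᵏ` and `eₖ² = 0`), the `N̄ₖ` commute pairwise, `eᵢ`
commutes with `N̄ₖ` for `k ≠ i` and `eʲ` with `N̄ₖ` for `k ≠ j`, while `eₖN̄ₖ = 0 = N̄ₖeᵏ`. Hence `P` is idempotent with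
`eᵢP = 0 = Peʲ`, and expanding `eᵢeᵏ = δᵢᵏ - eᵏeᵢ` in `(ʲPᵢ)(ᵏPₗ) = eʲPeᵢeᵏPeₗ` gives the
matrix-unit relation.

Matrix units are linearly independent as soon as the diagonal ones are nonzero: sandwiching a
relation `∑ c_{ab} ᵃP_b = 0` between `ⁱPᵢ` and `ʲPᵢ` leaves `c_{ij} ⁱPᵢ = 0`. That `ⁱPᵢ ≠ 0` is
seen in the Fock representation of `Cl(Q)` on `⋀V`, where `v` acts by `v ∧ -` and `α` by
contraction: `P` fixes `e₁ ∧ ⋯ ∧ eₙ`, so `ⁱPᵢ` fixes the wedge of the `eₖ` with `k ≠ i`.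
-/

noncomputable section

open CliffordAlgebra

variable (F : Type*) [Field F] (V : Type*) [AddCommGroup V] [Module F V]

/-- The quadratic form `Q[v ⊕ α] = α v` on `W = V ⊕ V*`. -/
def Qf : QuadraticForm F (V × Module.Dual F V) where
  toFun w := w.2 w.1
  toFun_smul a w := by simp [smul_eq_mul, mul_assoc]
  exists_companion' :=
    ⟨LinearMap.mk₂ F (fun w w' => w.2 w'.1 + w'.2 w.1)
      (fun m m' n => by simp; ring) (fun c m n => by simp; ring)
      (fun m n n' => by simp; ring) (fun c m n => by simp; ring),
     fun w w' => by simp; ring⟩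

/-- Image of a vector `v ∈ V` in the Clifford algebra. -/
def ιv (v : V) : CliffordAlgebra (Qf F V) := ι (Qf F V) (v, 0)

/-- Image of a covector `α ∈ V*` in the Clifford algebra. -/
def ιd (α : Module.Dual F V) : CliffordAlgebra (Qf F V) := ι (Qf F V) ((0 : V), α)

variable {n : ℕ} (bV : Module.Basis (Fin n) F V)

/-- The fundamental idempotent `P = N̄₁⋯N̄ₙ` with `N̄ⱼ = (eⱼ)(eʲ)`. -/
def Pel : CliffordAlgebra (Qf F V) :=
  (List.ofFn fun j : Fin n => ιv F V (bV j) * ιd F V (bV.coord j)).prod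

/-- The matrix-unit elements `ʲPᵢ = (eʲ)P(eᵢ)`. -/
def mUnit (j i : Fin n) : CliffordAlgebra (Qf F V) :=
  ιd F V (bV.coord j) * Pel F V bV * ιv F V (bV i)

theorem List.mul_prod_eq_zero {M : Type*} [MonoidWithZero M] {l : List M} {x a : M}
    (ha : a ∈ l) (hxa : x * a = 0) (hcomm : ∀ b ∈ l, b ≠ a → Commute x b) :
    x * l.prod = 0 := by
  induction l with
  | nil => simp at ha
  | cons b t ih =>
    rw [List.prod_cons, ← mul_assoc]
    by_cases hb : b = a
    · rw [hb, hxa, zero_mul]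
    · rw [(hcomm b List.mem_cons_self hb).eq, mul_assoc,
        ih (List.mem_of_ne_of_mem (Ne.symm hb) ha) fun c hc => hcomm c (List.mem_cons_of_mem b hc),
        mul_zero]

theorem List.prod_mul_eq_zero {M : Type*} [MonoidWithZero M] {l : List M} {y a : M}
    (ha : a ∈ l) (hay : a * y = 0) (hcomm : ∀ b ∈ l, b ≠ a → Commute y b) :
    l.prod * y = 0 := by
  induction l with
  | nil => simp at ha
  | cons b t ih =>
    rw [List.prod_cons, mul_assoc]
    by_cases ht : a ∈ t
    · rw [ih ht fun c hc => hcomm c (List.mem_cons_of_mem b hc), mul_zero]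
    · obtain rfl : a = b := (List.mem_cons.1 ha).resolve_right ht
      have hy : Commute y t.prod := Commute.list_prod_right _ _ fun c hc =>
        hcomm c (List.mem_cons_of_mem a hc) fun h => ht (h ▸ hc)
      rw [← hy.eq, ← mul_assoc, hay, zero_mul]

theorem IsIdempotentElem.list_prod {M : Type*} [Monoid M] {l : List M}
    (hl : ∀ a ∈ l, IsIdempotentElem a) (hcomm : l.Pairwise Commute) :
    IsIdempotentElem l.prod := by
  induction l with
  | nil => exact IsIdempotentElem.one
  | cons a t ih =>
    rw [List.pairwise_cons] at hcomm
    exact (hl a List.mem_cons_self).mul_of_commute (Commute.list_prod_right _ _ hcomm.1)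
      (ih (fun b hb => hl b (List.mem_cons_of_mem a hb)) hcomm.2)

theorem linearIndependent_of_mul_eq_ite {K A ι : Type*} [Field K] [Ring A] [Algebra K A]
    [DecidableEq ι] {e : ι → ι → A}
    (he : ∀ i j k l, e i j * e k l = if j = k then e i l else 0)
    (hne : ∀ i, e i i ≠ 0) : LinearIndependent K (fun p : ι × ι => e p.1 p.2) := by
  rw [linearIndependent_iff']
  rintro s g hg ⟨i, j⟩ hij
  have hsandwich : ∀ q : ι × ι,
      e i i * (g q • e q.1 q.2) * e j i = if q = (i, j) then g (i, j) • e i i else 0 := by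
    rintro ⟨k, l⟩
    rw [mul_smul_comm, smul_mul_assoc, he]
    obtain rfl | hk := eq_or_ne k i
    · obtain rfl | hl := eq_or_ne l j
      · simp [he]
      · simp [he, hl]
    · simp [hk, hk.symm]
  have := congrArg (fun x => e i i * x * e j i) hg
  simp only [Finset.mul_sum, Finset.sum_mul, hsandwich, Finset.sum_ite_eq', hij, if_true,
    mul_zero, zero_mul] at this
  exact (smul_eq_zero.1 this).resolve_right (hne i)

section Clifford

variable {F V}

lemma Qf_apply (w : V × Module.Dual F V) : Qf F V w = w.2 w.1 := rfl

lemma polar_Qf (w w' : V × Module.Dual F V) :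
    QuadraticMap.polar (Qf F V) w w' = w.2 w'.1 + w'.2 w.1 := by
  simp only [QuadraticMap.polar, Qf_apply, Prod.fst_add, Prod.snd_add, LinearMap.add_apply,
    map_add]
  ring

lemma ιv_mul_self (v : V) : ιv F V v * ιv F V v = 0 := by
  simp [ιv, ι_sq_scalar, Qf_apply]

lemma ιd_mul_self (α : Module.Dual F V) : ιd F V α * ιd F V α = 0 := by
  simp [ιd, ι_sq_scalar, Qf_apply]

lemma ιv_mul_ιv_comm (v w : V) : ιv F V v * ιv F V w = -(ιv F V w * ιv F V v) := by
  rw [ιv, ιv, ι_mul_ι_comm, polar_Qf]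
  simp

lemma ιd_mul_ιd_comm (α β : Module.Dual F V) : ιd F V α * ιd F V β = -(ιd F V β * ιd F V α) := by
  rw [ιd, ιd, ι_mul_ι_comm, polar_Qf]
  simp

lemma ιv_mul_ιd_comm (v : V) (α : Module.Dual F V) :
    ιv F V v * ιd F V α = algebraMap F _ (α v) - ιd F V α * ιv F V v := by
  rw [ιv, ιd, ι_mul_ι_comm, polar_Qf]
  simp

lemma ιd_mul_ιv_comm (v : V) (α : Module.Dual F V) :
    ιd F V α * ιv F V v = algebraMap F _ (α v) - ιv F V v * ιd F V α := by
  rw [ιv_mul_ιd_comm, sub_sub_cancel]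

lemma commute_ιv_ιv_mul_ιd {v w : V} {β : Module.Dual F V} (h : β v = 0) :
    Commute (ιv F V v) (ιv F V w * ιd F V β) := by
  rw [Commute, SemiconjBy, ← mul_assoc, ιv_mul_ιv_comm, neg_mul, mul_assoc, ιv_mul_ιd_comm, h]
  simp [mul_assoc]

lemma commute_ιd_ιv_mul_ιd {w : V} {α β : Module.Dual F V} (h : α w = 0) :
    Commute (ιd F V α) (ιv F V w * ιd F V β) := by
  rw [Commute, SemiconjBy, ← mul_assoc, ιd_mul_ιv_comm, h, map_zero, zero_sub, neg_mul,
    mul_assoc, ιd_mul_ιd_comm]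
  simp [mul_assoc]

lemma isIdempotentElem_ιv_mul_ιd {v : V} {α : Module.Dual F V} (h : α v = 1) :
    IsIdempotentElem (ιv F V v * ιd F V α) := by
  rw [IsIdempotentElem, mul_assoc, ← mul_assoc (ιd F V α), ιd_mul_ιv_comm, h, map_one, sub_mul,
    mul_assoc, ιd_mul_self, mul_zero, sub_zero, one_mul]

lemma coord_basis (i k : Fin n) : bV.coord k (bV i) = if i = k then 1 else 0 := by
  rw [Module.Basis.coord_apply, Module.Basis.repr_self_apply]

lemma coord_basis_of_ne {i k : Fin n} (h : i ≠ k) : bV.coord k (bV i) = 0 := by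
  rw [coord_basis, if_neg h]

def nbar (k : Fin n) : CliffordAlgebra (Qf F V) := ιv F V (bV k) * ιd F V (bV.coord k)

lemma Pel_eq_prod_nbar : Pel F V bV = (List.ofFn (nbar bV)).prod := rfl

lemma commute_nbar {j k : Fin n} (h : j ≠ k) : Commute (nbar bV j) (nbar bV k) :=
  (commute_ιv_ιv_mul_ιd (coord_basis_of_ne bV h)).mul_left
    (commute_ιd_ιv_mul_ιd (coord_basis_of_ne bV h.symm))

lemma isIdempotentElem_Pel : IsIdempotentElem (Pel F V bV) := by
  refine IsIdempotentElem.list_prod ?_ (List.pairwise_ofFn.2 fun j k hjk => commute_nbar bV hjk.ne)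
  simp only [List.mem_ofFn', Set.forall_mem_range]
  exact fun k => isIdempotentElem_ιv_mul_ιd (by simp)

lemma ιv_mul_Pel (i : Fin n) : ιv F V (bV i) * Pel F V bV = 0 := by
  refine List.mul_prod_eq_zero (a := nbar bV i) (List.mem_ofFn' _ _ |>.2 ⟨i, rfl⟩)
    (by rw [nbar, ← mul_assoc, ιv_mul_self, zero_mul]) ?_
  intro b hb hk
  obtain ⟨k, rfl⟩ := (List.mem_ofFn' _ _).1 hb
  exact commute_ιv_ιv_mul_ιd (coord_basis_of_ne bV fun h => hk (h ▸ rfl))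

lemma Pel_mul_ιd (j : Fin n) : Pel F V bV * ιd F V (bV.coord j) = 0 := by
  refine List.prod_mul_eq_zero (a := nbar bV j) (List.mem_ofFn' _ _ |>.2 ⟨j, rfl⟩)
    (by rw [nbar, mul_assoc, ιd_mul_self, mul_zero]) ?_
  intro b hb hk
  obtain ⟨k, rfl⟩ := (List.mem_ofFn' _ _).1 hb
  exact commute_ιd_ιv_mul_ιd (coord_basis_of_ne bV fun h => hk (h ▸ rfl))

lemma mUnit_mul (i j k l : Fin n) :
    mUnit F V bV j i * mUnit F V bV k l = if i = k then mUnit F V bV j l else 0 := by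
  calc mUnit F V bV j i * mUnit F V bV k l
      = ιd F V (bV.coord j) * Pel F V bV * (ιv F V (bV i) * ιd F V (bV.coord k)) *
          Pel F V bV * ιv F V (bV l) := by simp only [mUnit, mul_assoc]
    _ = bV.coord k (bV i) • (ιd F V (bV.coord j) * (Pel F V bV * Pel F V bV) * ιv F V (bV l)) -
          ιd F V (bV.coord j) * (Pel F V bV * ιd F V (bV.coord k)) *
            (ιv F V (bV i) * Pel F V bV * ιv F V (bV l)) := by
        rw [ιv_mul_ιd_comm, Algebra.algebraMap_eq_smul_one]
        simp only [mul_sub, sub_mul, mul_smul_comm, smul_mul_assoc, mul_one, mul_assoc]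
    _ = if i = k then mUnit F V bV j l else 0 := by
      rw [(isIdempotentElem_Pel bV).eq, Pel_mul_ιd, ιv_mul_Pel, coord_basis]
      split_ifs <;> simp [mUnit]

end Clifford

section Fock

variable {F V}

def fockMap : (V × Module.Dual F V) →ₗ[F] Module.End F (ExteriorAlgebra F V) :=
  LinearMap.mul F _ ∘ₗ ExteriorAlgebra.ι F ∘ₗ LinearMap.fst F V _ +
    contractLeft ∘ₗ LinearMap.snd F V _

lemma fockMap_apply (w : V × Module.Dual F V) (x : ExteriorAlgebra F V) :
    fockMap w x = ExteriorAlgebra.ι F w.1 * x + contractLeft w.2 x := rfl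

lemma fockMap_mul_self (w : V × Module.Dual F V) :
    fockMap w * fockMap w = algebraMap F _ (Qf F V w) := by
  refine LinearMap.ext fun x => ?_
  simp only [Module.End.mul_apply, fockMap_apply, map_add, contractLeft_ι_mul,
    contractLeft_contractLeft, Module.algebraMap_end_apply, Qf_apply, ← mul_assoc,
    ExteriorAlgebra.ι_sq_zero, zero_mul]
  abel

def fockRep : CliffordAlgebra (Qf F V) →ₐ[F] Module.End F (ExteriorAlgebra F V) :=
  lift (Qf F V) ⟨fockMap, fockMap_mul_self⟩

lemma fockRep_ιv (v : V) :
    fockRep (ιv F V v) = LinearMap.mulLeft F (ExteriorAlgebra.ι F v) := by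
  refine LinearMap.ext fun x => ?_
  simp [fockRep, ιv, fockMap_apply]

lemma fockRep_ιd (α : Module.Dual F V) : fockRep (ιd F V α) = contractLeft α := by
  refine LinearMap.ext fun x => ?_
  simp [fockRep, ιd, fockMap_apply]

def wedge (l : List (Fin n)) : ExteriorAlgebra F V :=
  (l.map fun k => ExteriorAlgebra.ι F (bV k)).prod

lemma wedge_cons (k : Fin n) (l : List (Fin n)) :
    wedge bV (k :: l) = ExteriorAlgebra.ι F (bV k) * wedge bV l := by
  simp [wedge]

lemma contractLeft_wedge_of_notMem {l : List (Fin n)} {k : Fin n} (hk : k ∉ l) :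
    contractLeft (bV.coord k) (wedge bV l) = 0 := by
  induction l with
  | nil => exact contractLeft_one _ _
  | cons j l ih =>
    rw [List.mem_cons, not_or] at hk
    rw [wedge_cons, contractLeft_ι_mul, ih hk.2, coord_basis_of_ne bV (Ne.symm hk.1)]
    simp

lemma ι_mul_contractLeft_wedge {l : List (Fin n)} {k : Fin n} (hl : l.Nodup) (hk : k ∈ l) :
    ExteriorAlgebra.ι F (bV k) * contractLeft (bV.coord k) (wedge bV l) = wedge bV l := by
  induction l with
  | nil => simp at hk
  | cons j l ih =>
    rw [List.nodup_cons] at hl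
    rw [wedge_cons, contractLeft_ι_mul]
    obtain rfl | hkj := eq_or_ne k j
    · simp [contractLeft_wedge_of_notMem bV hl.1]
    · rw [coord_basis_of_ne bV hkj.symm, zero_smul, zero_sub, mul_neg, ← mul_assoc,
        eq_neg_of_add_eq_zero_left (ExteriorAlgebra.ι_add_mul_swap _ _), neg_mul, neg_neg,
        mul_assoc, ih hl.2 (List.mem_of_ne_of_mem hkj hk)]

lemma wedge_ne_zero {l : List (Fin n)} (hl : l.Nodup) : wedge bV l ≠ 0 := by
  induction l with
  | nil => exact one_ne_zero
  | cons j l ih =>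
    rw [List.nodup_cons] at hl
    intro h
    have := congrArg (contractLeft (bV.coord j)) h
    rw [wedge_cons, contractLeft_ι_mul, contractLeft_wedge_of_notMem bV hl.1] at this
    exact ih hl.2 (by simpa using this)

lemma fockRep_Pel_wedge {l : List (Fin n)} (hl : l.Nodup) (hall : ∀ k, k ∈ l) :
    fockRep (Pel F V bV) (wedge bV l) = wedge bV l := by
  have hfix (k : Fin n) : fockRep (nbar bV k) ∈ MulAction.stabilizerSubmonoid _ (wedge bV l) := by
    rw [MulAction.mem_stabilizerSubmonoid_iff, Module.End.smul_def, nbar, map_mul,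
      Module.End.mul_apply, fockRep_ιv, fockRep_ιd, LinearMap.mulLeft_apply,
      ι_mul_contractLeft_wedge bV hl (hall k)]
  rw [Pel_eq_prod_nbar, map_list_prod, ← Module.End.smul_def,
    ← MulAction.mem_stabilizerSubmonoid_iff]
  refine Submonoid.list_prod_mem _ fun f hf => ?_
  obtain ⟨k, rfl⟩ := by simpa using hf
  exact hfix k

lemma mUnit_self_ne_zero (i : Fin n) : mUnit F V bV i i ≠ 0 := by
  set l := (List.finRange n).erase i
  have hmem (k : Fin n) : k ∈ l ↔ k ≠ i ∧ k ∈ List.finRange n :=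
    (List.nodup_finRange n).mem_erase_iff
  have hi : i ∉ l := fun h => ((hmem i).1 h).1 rfl
  have hl : l.Nodup := (List.nodup_finRange n).erase i
  have hall (k : Fin n) : k ∈ i :: l := by
    by_cases hk : k = i
    · exact hk ▸ List.mem_cons_self
    · exact List.mem_cons_of_mem i ((hmem k).2 ⟨hk, List.mem_finRange k⟩)
  have hfix : fockRep (mUnit F V bV i i) (wedge bV l) = wedge bV l := by
    rw [mUnit, map_mul, map_mul, Module.End.mul_apply, Module.End.mul_apply, fockRep_ιv,
      LinearMap.mulLeft_apply, ← wedge_cons, fockRep_Pel_wedge bV (List.nodup_cons.2 ⟨hi, hl⟩) hall,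
      fockRep_ιd, wedge_cons, contractLeft_ι_mul, contractLeft_wedge_of_notMem bV hi]
    simp
  intro h
  rw [h, map_zero, LinearMap.zero_apply] at hfix
  exact wedge_ne_zero bV hl hfix.symm

end Fock

/-- `(ʲPᵢ)(ᵏPₗ) = δᵢᵏ (ʲPₗ)`, and the `ʲPᵢ` are linearly
independent. -/
theorem stmt8 :
    (∀ i j k l : Fin n,
      mUnit F V bV j i * mUnit F V bV k l =
        if i = k then mUnit F V bV j l else 0) ∧
    LinearIndependent F (fun p : Fin n × Fin n => mUnit F V bV p.1 p.2) :=
  ⟨mUnit_mul bV, linearIndependent_of_mul_eq_ite (e := mUnit F V bV)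
    (fun j i k l => mUnit_mul bV i j k l) (mUnit_self_ne_zero bV)⟩
end
end

section
/- For basis elements of the Clifford algebra of the form ⁽ʲ¹⋯ʲᵖ⁾P₍kq⋯k₁₎ = (e^{j₁})⋯(e^{j_p}) P (e_{k_q})⋯(e_{k₁}), the multiplication rule holds: (⁽ʲ¹⋯ʲᵖ⁾P₍kq⋯k₁₎)·(⁽ʲ'¹⋯ʲ'ᵖ'⁾P₍k'q'⋯k'₁₎) = δ_{q,p'} · δ^{j'₁⋯j'_{p'}}_{k₁⋯k_q} · ⁽ʲ¹⋯ʲᵖ⁾P₍k'q'⋯k'₁₎, where δ^{j'₁⋯j'_{p'}}_{k₁⋯k_q} is the generalized Kronecker delta (determinant of the matrix of Kronecker deltas). -/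
/-! Moving `e_{k₁}` rightwards through `e^{j'₁}⋯e^{j'_{p'}}` with `e_k e^j + e^j e_k = δ_k^j` until
it reaches `P`, where `e_k P = 0`, expands `P e_{k_q}⋯e_{k₁} e^{j'₁}⋯e^{j'_{p'}} P` exactly as a
determinant is expanded along its first column. Induction on `q` then yields the generalized
Kronecker delta `δ^{J'}_K P`; when the lengths differ the induction ends at `P e^j = 0` or
`e_k P = 0` instead. -/

noncomputable section

open CliffordAlgebra

variable (F : Type*) [Field F] (V : Type*) [AddCommGroup V] [Module F V]

variable {n : ℕ} (bV : Module.Basis (Fin n) F V)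

variable (P : CliffordAlgebra (Qf F V))

/-- The basis element `⁽ʲ¹⋯ʲᵖ⁾P₍k_q⋯k₁₎ = (e^{j₁})⋯(e^{j_p}) P (e_{k_q})⋯(e_{k₁})`,
where `J = (j₁,…,j_p)` and `K = (k₁,…,k_q)`. -/
def GP {p q : ℕ} (J : Fin p → Fin n) (K : Fin q → Fin n) :
    CliffordAlgebra (Qf F V) :=
  (List.ofFn fun a => ιd F V (bV.coord (J a))).prod * P *
    (List.ofFn fun b => ιv F V (bV (K b))).reverse.prod

variable {V}

/-- `ιvProd F w = (w_q)⋯(w_1)`, the order in which the `e_k` stand to the right of `P`. -/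
def ιvProd {q : ℕ} (w : Fin q → V) : CliffordAlgebra (Qf F V) :=
  (List.ofFn fun b => ιv F V (w b)).reverse.prod

def ιdProd {m : ℕ} (β : Fin m → Module.Dual F V) : CliffordAlgebra (Qf F V) :=
  (List.ofFn fun a => ιd F V (β a)).prod

variable {F}

@[simp]
lemma ιvProd_zero (w : Fin 0 → V) : ιvProd F w = 1 := rfl

@[simp]
lemma ιdProd_zero (β : Fin 0 → Module.Dual F V) : ιdProd F β = 1 := rfl

lemma ιvProd_succ {q : ℕ} (w : Fin (q + 1) → V) :
    ιvProd F w = ιvProd F (Fin.tail w) * ιv F V (w 0) := by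
  simp [ιvProd, List.ofFn_succ, Fin.tail]

lemma ιdProd_succ {m : ℕ} (β : Fin (m + 1) → Module.Dual F V) :
    ιdProd F β = ιd F V (β 0) * ιdProd F (Fin.tail β) := by
  simp [ιdProd, List.ofFn_succ, Fin.tail]

lemma ιv_mul_ιd_add_ιd_mul_ιv (v : V) (α : Module.Dual F V) :
    ιv F V v * ιd F V α + ιd F V α * ιv F V v = algebraMap F _ (α v) := by
  rw [ιv, ιd, CliffordAlgebra.ι_mul_ι_add_swap]
  simp [QuadraticMap.polar, Qf]

lemma ιv_mul_ιd_mul (v : V) (α : Module.Dual F V) (z : CliffordAlgebra (Qf F V)) :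
    ιv F V v * (ιd F V α * z) = α v • z - ιd F V α * (ιv F V v * z) := by
  rw [← mul_assoc, eq_sub_of_add_eq (ιv_mul_ιd_add_ιd_mul_ιv v α), sub_mul,
    Algebra.algebraMap_eq_smul_one, smul_one_mul, mul_assoc]

/-- Left multiplication by `ιv v` acts on `ιdProd F β * y` as the contraction with `v`. -/
lemma ιv_mul_ιdProd_mul_of_ιv_mul_eq_zero {m : ℕ} {v : V} {y : CliffordAlgebra (Qf F V)}
    (hy : ιv F V v * y = 0) (β : Fin (m + 1) → Module.Dual F V) :
    ιv F V v * (ιdProd F β * y) =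
      ∑ i : Fin (m + 1), ((-1 : F) ^ (i : ℕ) * β i v) • (ιdProd F (i.removeNth β) * y) := by
  induction m with
  | zero => simp [ιdProd_succ, ιv_mul_ιd_mul, hy]
  | succ m ih =>
    have hsucc : ∀ i : Fin (m + 1),
        ιdProd F (i.succ.removeNth β) = ιd F V (β 0) * ιdProd F (i.removeNth (Fin.tail β)) := by
      intro i
      rw [ιdProd_succ]
      congr 2
      funext j
      simp [Fin.removeNth, Fin.tail, Fin.succ_succAbove_succ]
    rw [ιdProd_succ, mul_assoc, ιv_mul_ιd_mul, ih (Fin.tail β)]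
    conv_rhs => rw [Fin.sum_univ_succ]
    simp only [hsucc, Fin.removeNth_zero, Finset.mul_sum, mul_smul_comm, Fin.val_succ, Fin.val_zero,
      pow_succ, pow_zero, one_mul, mul_neg_one, neg_mul, neg_smul, Finset.sum_neg_distrib,
      Fin.tail, mul_assoc, sub_eq_add_neg]

section Idempotent

variable {P : CliffordAlgebra (Qf F V)}

lemma P_mul_ιvProd_mul_ιdProd_mul_P_succ (hvP : ∀ v : V, ιv F V v * P = 0) {q m : ℕ}
    (w : Fin (q + 1) → V) (β : Fin (m + 1) → Module.Dual F V) :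
    P * ιvProd F w * ιdProd F β * P =
      ∑ i : Fin (m + 1), ((-1 : F) ^ (i : ℕ) * β i (w 0)) •
        (P * ιvProd F (Fin.tail w) * ιdProd F (i.removeNth β) * P) := by
  simp only [ιvProd_succ, mul_assoc]
  rw [ιv_mul_ιdProd_mul_of_ιv_mul_eq_zero (hvP _)]
  simp only [Finset.mul_sum, mul_smul_comm]

lemma P_mul_ιvProd_mul_ιdProd_mul_P_of_ne (hPd : ∀ ρ : Module.Dual F V, P * ιd F V ρ = 0)
    (hvP : ∀ v : V, ιv F V v * P = 0) {q m : ℕ} (w : Fin q → V)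
    (β : Fin m → Module.Dual F V) (hqm : q ≠ m) :
    P * ιvProd F w * ιdProd F β * P = 0 := by
  induction q generalizing m with
  | zero =>
    obtain ⟨m, rfl⟩ := Nat.exists_eq_succ_of_ne_zero hqm.symm
    rw [ιvProd_zero, ιdProd_succ, mul_one, ← mul_assoc, hPd, zero_mul, zero_mul]
  | succ q ih =>
    cases m with
    | zero => rw [ιdProd_zero, mul_one, ιvProd_succ, mul_assoc, mul_assoc, hvP, mul_zero, mul_zero]
    | succ m =>
      rw [P_mul_ιvProd_mul_ιdProd_mul_P_succ hvP]
      exact Finset.sum_eq_zero fun i _ => by rw [ih _ _ (by omega), smul_zero]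

lemma P_mul_ιvProd_mul_ιdProd_mul_P (hP2 : P * P = P) (hvP : ∀ v : V, ιv F V v * P = 0)
    {q : ℕ} (w : Fin q → V) (β : Fin q → Module.Dual F V) :
    P * ιvProd F w * ιdProd F β * P = (Matrix.of fun a b => β a (w b)).det • P := by
  induction q with
  | zero => simp [hP2]
  | succ q ih =>
    rw [P_mul_ιvProd_mul_ιdProd_mul_P_succ hvP, Matrix.det_succ_column_zero, Finset.sum_smul]
    refine Finset.sum_congr rfl fun i _ => ?_
    -- the `i`-th minor along column `0` is the matrix of `(i.removeNth β, Fin.tail w)`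
    rw [ih, smul_smul]
    rfl

end Idempotent

lemma GP_eq {p q : ℕ} (J : Fin p → Fin n) (K : Fin q → Fin n) :
    GP F V bV P J K =
      ιdProd F (fun a => bV.coord (J a)) * P * ιvProd F (fun b => bV (K b)) :=
  rfl

lemma GP_mul_GP {p q p' q' : ℕ} (J : Fin p → Fin n) (K : Fin q → Fin n)
    (J' : Fin p' → Fin n) (K' : Fin q' → Fin n) :
    GP F V bV P J K * GP F V bV P J' K' =
      ιdProd F (fun a => bV.coord (J a)) *
        (P * ιvProd F (fun b => bV (K b)) * ιdProd F (fun a => bV.coord (J' a)) * P) *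
          ιvProd F (fun b => bV (K' b)) := by
  simp only [GP_eq, mul_assoc]

/-- the multiplication rule
`(⁽ᴶ⁾P₍K₎)(⁽ᴶ'⁾P₍K'₎) = δ_{q,p'} δ^{J'}_{K} (⁽ᴶ⁾P₍K'₎)`, where `δ^{J'}_{K}` is
the generalized Kronecker delta. -/
theorem stmt17
    (hP2 : P * P = P)
    (hPd : ∀ ρ : Module.Dual F V, P * ιd F V ρ = 0)
    (hvP : ∀ v : V, ιv F V v * P = 0)
    {p q q' : ℕ} (J : Fin p → Fin n) (K : Fin q → Fin n) (K' : Fin q' → Fin n) :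
    (∀ {p' : ℕ} (J' : Fin p' → Fin n), q ≠ p' →
      GP F V bV P J K * GP F V bV P J' K' = 0) ∧
    (∀ J' : Fin q → Fin n,
      GP F V bV P J K * GP F V bV P J' K' =
        (Matrix.of fun a b : Fin q =>
          if J' a = K b then (1 : F) else 0).det • GP F V bV P J K') := by
  refine ⟨fun J' hqp => ?_, fun J' => ?_⟩
  · rw [GP_mul_GP, P_mul_ιvProd_mul_ιdProd_mul_P_of_ne hPd hvP _ _ hqp, mul_zero, zero_mul]
  · have hδ : (Matrix.of fun a b : Fin q => bV.coord (J' a) (bV (K b))) =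
        Matrix.of fun a b => if J' a = K b then (1 : F) else 0 := by
      ext a b
      simp only [Matrix.of_apply, Module.Basis.coord_apply, Module.Basis.repr_self_apply]
      exact if_congr eq_comm rfl rfl
    rw [GP_mul_GP, P_mul_ιvProd_mul_ιdProd_mul_P hP2 hvP, hδ, mul_smul_comm, smul_mul_assoc,
      ← GP_eq]
end
end

section
/- Define Π_p = (p!)⁻¹ Σ_{j₁,…,j_p} (e^{j₁})⋯(e^{j_p}) P (e_{j_p})⋯(e_{j₁}) for 0 ≤ p ≤ n (with Π₀ = P). Then the Π_p form a complete orthogonal family of idempotents: Σ_{p=0}^{n} Π_p = 1 and Π_p Π_q = δ_{pq} Π_p. -/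
/-!
Write `aᵢ = (eᵢ)` and `bᵢ = (eⁱ)`. They satisfy the canonical anticommutation relations, so the
`aᵢbᵢ` are pairwise commuting idempotents with `bᵢaᵢ = 1 - aᵢbᵢ`, and the atoms
`t_T = ∏_{i ∈ T} bᵢaᵢ ∏_{i ∉ T} aᵢbᵢ` (`T ⊆ {1,…,n}`) of the Boolean algebra they generate form a
complete orthogonal family of idempotents, with `P = t_∅`. Since `bₖ` and `aₖ` commute with every
factor of `t_T` except the `k`-th one, `bₖ t_T aₖ` is `t_{T ∪ {k}}` for `k ∉ T` and `0` otherwise.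
Hence each injective string `j` contributes `t_{im j}` to `Π_p`, every `p`-subset is hit `p!` times,
and `Π_p = Σ_{|T| = p} t_T`; grouping the atoms by `|T|` gives the claim.
-/

noncomputable section

open CliffordAlgebra

variable (F : Type*) [Field F] (V : Type*) [AddCommGroup V] [Module F V]

variable {n : ℕ} (bV : Module.Basis (Fin n) F V)

/-- The projector `Π_p = (p!)⁻¹ Σ_{j₁,…,j_p} (e^{j₁})⋯(e^{j_p}) P (e_{j_p})⋯(e_{j₁})`. -/
def Pip (p : ℕ) : CliffordAlgebra (Qf F V) :=
  ((p.factorial : F))⁻¹ •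
    ∑ j : Fin p → Fin n,
      (List.ofFn fun a => ιd F V (bV.coord (j a))).prod * Pel F V bV *
        (List.ofFn fun a => ιv F V (bV (j a))).reverse.prod

open Finset

universe u

section CommutativeCube

variable {R ι : Type*} [CommRing R] [Fintype ι] [DecidableEq ι] {e : ι → R}

theorem completeOrthogonalIdempotents_prod_ite (he : ∀ i, IsIdempotentElem (e i)) :
    CompleteOrthogonalIdempotents fun T : Finset ι => ∏ i, if i ∈ T then 1 - e i else e i where
  idem T := prod_induction _ _ (fun _ _ => .mul) .one fun i _ => by
    split_ifs
    exacts [(he i).one_sub, he i]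
  ortho T U hTU := by
    obtain ⟨i, hi⟩ : ∃ i, ¬(i ∈ T ↔ i ∈ U) := by
      by_contra! h
      exact hTU (Finset.ext h)
    rw [← prod_mul_distrib]
    refine prod_eq_zero (mem_univ i) ?_
    by_cases hT : i ∈ T <;> simp only [hT, true_iff, false_iff] at hi <;>
      simp [hT, hi, (he i).one_sub_mul_self, (he i).mul_one_sub_self]
  complete := by
    have hprod (T : Finset ι) : (∏ i, if i ∈ T then 1 - e i else e i) =
        (∏ i ∈ T, (1 - e i)) * ∏ i ∈ Tᶜ, e i := by
      rw [prod_ite, filter_mem_eq_inter, univ_inter, filter_notMem_eq_sdiff, compl_eq_univ_sdiff]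
    simp_rw [hprod, ← Fintype.prod_add, sub_add_cancel, prod_const_one]

end CommutativeCube

open scoped IsMulCommutative in
theorem exists_commRing_ringHom_of_commute {ι : Type*} {A : Type u} [Ring A] {q : ι → A}
    (hq : ∀ i j, Commute (q i) (q j)) :
    ∃ (R : Type u) (_ : CommRing R) (φ : R →+* A) (e : ι → R),
      Function.Injective φ ∧ ⇑φ ∘ e = q := by
  let S := Subring.closure (Set.range q)
  have : IsMulCommutative S :=
    Subring.isMulCommutative_closure (by rintro _ ⟨i, rfl⟩ _ ⟨j, rfl⟩; exact hq i j)
  exact ⟨S, inferInstance, S.subtype, fun i => ⟨q i, Subring.subset_closure ⟨i, rfl⟩⟩,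
    Subtype.val_injective, rfl⟩

section IdempotentAtom

variable {A : Type*} [Ring A] {n : ℕ} {q : Fin n → A}

def idempotentAtom (q : Fin n → A) (T : Finset (Fin n)) : A :=
  (List.ofFn fun i => if i ∈ T then 1 - q i else q i).prod

theorem idempotentAtom_comp_ringHom {R : Type*} [CommRing R] (φ : R →+* A) (e : Fin n → R)
    (T : Finset (Fin n)) :
    idempotentAtom (φ ∘ e) T = φ (∏ i, if i ∈ T then 1 - e i else e i) := by
  rw [← List.prod_ofFn, map_list_prod, List.map_ofFn, idempotentAtom]
  congr 1
  refine congrArg List.ofFn (funext fun i => ?_)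
  by_cases hi : i ∈ T <;> simp [hi]

theorem completeOrthogonalIdempotents_idempotentAtom (hcomm : ∀ i j, Commute (q i) (q j))
    (hidem : ∀ i, IsIdempotentElem (q i)) :
    CompleteOrthogonalIdempotents (idempotentAtom q) := by
  obtain ⟨R, _, φ, e, hφ, rfl⟩ := exists_commRing_ringHom_of_commute hcomm
  have he (i : Fin n) : IsIdempotentElem (e i) := hφ (by simpa using (hidem i).eq)
  have := (completeOrthogonalIdempotents_prod_ite he).map φ
  convert this using 1
  funext T
  exact idempotentAtom_comp_ringHom φ e T

theorem exists_idempotentAtom_eq_mul (hcomm : ∀ i j, Commute (q i) (q j)) (k : Fin n)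
    (T : Finset (Fin n)) :
    ∃ r : A, (∀ x : A, (∀ i, i ≠ k → Commute x (q i)) → Commute x r) ∧
      idempotentAtom q (T.erase k) = q k * r ∧ idempotentAtom q (insert k T) = (1 - q k) * r := by
  obtain ⟨R, _, φ, e, -, rfl⟩ := exists_commRing_ringHom_of_commute hcomm
  let r := ∏ i ∈ univ.erase k, if i ∈ T then 1 - e i else e i
  have hsplit (U : Finset (Fin n)) (hU : ∀ i, i ≠ k → (i ∈ U ↔ i ∈ T)) :
      idempotentAtom (φ ∘ e) U = φ (if k ∈ U then 1 - e k else e k) * φ r := by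
    rw [idempotentAtom_comp_ringHom, ← mul_prod_erase _ _ (mem_univ k), map_mul]
    refine congrArg (_ * φ ·) (prod_congr rfl fun i hi => ?_)
    simp only [hU i (ne_of_mem_erase hi)]
  refine ⟨φ r, fun x hx => ?_, ?_, ?_⟩
  · refine prod_induction _ (fun y => Commute x (φ y)) (fun y z hy hz => ?_) ?_ fun i hi => ?_
    · rw [map_mul]; exact hy.mul_right hz
    · rw [map_one]; exact Commute.one_right x
    · have := hx i (ne_of_mem_erase hi)
      split_ifs
      · rw [map_sub, map_one]; exact (Commute.one_right x).sub_right this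
      · exact this
  · rw [hsplit _ fun i hi => by simp [hi]]; simp
  · rw [hsplit _ fun i hi => by simp [hi]]; simp

end IdempotentAtom

theorem commute_mul_of_anticommute {A : Type*} [Ring A] {x y z : A} (hy : x * y + y * x = 0)
    (hz : x * z + z * x = 0) : Commute x (y * z) := by
  change x * (y * z) = y * z * x
  rw [← mul_assoc, eq_neg_of_add_eq_zero_left hy, neg_mul, mul_assoc,
    eq_neg_of_add_eq_zero_left hz, mul_neg, neg_neg, mul_assoc]

structure IsCAR {ι A : Type*} [DecidableEq ι] [Ring A] (a b : ι → A) : Prop where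
  anticomm_a (i j : ι) : a i * a j + a j * a i = 0
  anticomm_b (i j : ι) : b i * b j + b j * b i = 0
  anticomm_a_b (i j : ι) : a i * b j + b j * a i = if i = j then 1 else 0
  -- not implied by `anticomm_a` in characteristic 2
  mul_self_a (i : ι) : a i * a i = 0

namespace IsCAR

section

variable {ι A : Type*} [DecidableEq ι] [Ring A] {a b : ι → A}

theorem b_mul_a (h : IsCAR a b) (i : ι) : b i * a i = 1 - a i * b i := by
  rw [eq_sub_iff_add_eq, add_comm, h.anticomm_a_b, if_pos rfl]

theorem isIdempotentElem_a_mul_b (h : IsCAR a b) (i : ι) : IsIdempotentElem (a i * b i) := by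
  change a i * b i * (a i * b i) = a i * b i
  rw [mul_assoc, ← mul_assoc (b i), h.b_mul_a]
  simp only [sub_mul, one_mul, mul_sub, ← mul_assoc, h.mul_self_a, zero_mul, sub_zero]

theorem commute_a (h : IsCAR a b) {i k : ι} (hik : i ≠ k) : Commute (a k) (a i * b i) :=
  commute_mul_of_anticommute (h.anticomm_a k i) (by rw [h.anticomm_a_b, if_neg hik.symm])

theorem commute_b (h : IsCAR a b) {i k : ι} (hik : i ≠ k) : Commute (b k) (a i * b i) :=
  commute_mul_of_anticommute (by rw [add_comm, h.anticomm_a_b, if_neg hik]) (h.anticomm_b k i)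

theorem commute_a_mul_b (h : IsCAR a b) (i j : ι) : Commute (a i * b i) (a j * b j) := by
  obtain rfl | hij := eq_or_ne i j
  · exact Commute.refl _
  · exact (h.commute_a hij.symm).mul_left (h.commute_b hij.symm)

end

section

variable {A : Type*} [Ring A] {n : ℕ} {a b : Fin n → A}

theorem b_mul_idempotentAtom_mul_a (h : IsCAR a b) (k : Fin n) (T : Finset (Fin n)) :
    b k * idempotentAtom (fun i => a i * b i) T * a k =
      if k ∈ T then 0 else idempotentAtom (fun i => a i * b i) (insert k T) := by
  obtain ⟨r, hr, herase, hinsert⟩ := exists_idempotentAtom_eq_mul h.commute_a_mul_b k T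
  have hra : a k * r = r * a k := hr _ fun i hi => h.commute_a hi
  split_ifs with hk
  · rw [← insert_eq_of_mem hk, hinsert, ← h.b_mul_a]
    calc b k * (b k * a k * r) * a k = b k * b k * (a k * a k) * r := by
          simp only [mul_assoc, ← hra]
      _ = 0 := by rw [h.mul_self_a, mul_zero, zero_mul]
  · rw [← erase_eq_of_notMem hk, herase, erase_eq_of_notMem hk, hinsert]
    calc b k * (a k * b k * r) * a k = b k * a k * (b k * a k) * r := by
          simp only [mul_assoc, ← hra]
      _ = (1 - a k * b k) * r := by rw [h.b_mul_a, (h.isIdempotentElem_a_mul_b k).one_sub.eq]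

theorem prod_map_b_mul_idempotentAtom_mul_prod_map_a (h : IsCAR a b) (l : List (Fin n))
    (T : Finset (Fin n)) :
    (l.map b).prod * idempotentAtom (fun i => a i * b i) T * (l.map a).reverse.prod =
      if l.Nodup ∧ ∀ i ∈ l, i ∉ T then idempotentAtom (fun i => a i * b i) (T ∪ l.toFinset)
      else 0 := by
  induction l with
  | nil => simp
  | cons x l ih =>
    calc ((x :: l).map b).prod * idempotentAtom (fun i => a i * b i) T *
          ((x :: l).map a).reverse.prod
        = b x * ((l.map b).prod * idempotentAtom (fun i => a i * b i) T *
            (l.map a).reverse.prod) * a x := by simp [mul_assoc]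
      _ = _ := by
        rw [ih]
        by_cases hl : l.Nodup ∧ ∀ i ∈ l, i ∉ T
        · rw [if_pos hl, h.b_mul_idempotentAtom_mul_a, List.toFinset_cons, union_insert]
          simp only [List.nodup_cons, List.forall_mem_cons, mem_union, List.mem_toFinset]
          split_ifs <;> tauto
        · rw [if_neg hl, mul_zero, zero_mul, if_neg]
          rintro ⟨hnd, hT⟩
          exact hl ⟨hnd.of_cons, fun i hi => hT i (List.mem_cons_of_mem _ hi)⟩

end

end IsCAR

section Counting

variable {ι : Type*} [Fintype ι] [DecidableEq ι]

theorem card_injective_image_eq {p : ℕ} {T : Finset ι} (hT : #T = p) :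
    #{j : Fin p → ι | Function.Injective j ∧ univ.image j = T} = p.factorial := by
  have hrange {j : Fin p → ι} (hj : univ.image j = T) : Set.range j = T := by
    rw [← hj, coe_image, coe_univ, Set.image_univ]
  let enum : {j : Fin p → ι // Function.Injective j ∧ univ.image j = T} ≃ (Fin p ≃ T) :=
    { toFun j := (Equiv.ofInjective j.1 j.2.1).trans (Equiv.setCongr (hrange j.2.2))
      invFun e := ⟨fun t => e t, Subtype.val_injective.comp e.injective, by
        ext x
        simpa using ⟨fun ⟨t, ht⟩ => ht ▸ (e t).2, fun hx => ⟨e.symm ⟨x, hx⟩, by simp⟩⟩⟩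
      left_inv _ := rfl
      right_inv _ := Equiv.ext fun _ => rfl }
  rw [← Fintype.card_subtype, Fintype.card_congr enum,
    Fintype.card_equiv (Fintype.equivFinOfCardEq (by simp [hT])).symm, Fintype.card_fin]

theorem sum_ite_injective_eq {M : Type*} [AddCommMonoid M] (p : ℕ) (f : Finset ι → M) :
    ∑ j : Fin p → ι, (if Function.Injective j then f (univ.image j) else 0) =
      p.factorial • ∑ T with #T = p, f T := by
  rw [← sum_filter, ← sum_fiberwise_of_maps_to (t := {T | #T = p}) (g := fun j => univ.image j)
    fun j hj => by simp [card_image_of_injective _ (mem_filter.1 hj).2], smul_sum]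
  refine sum_congr rfl fun T hT => ?_
  rw [sum_congr rfl fun j hj => congrArg f (mem_filter.1 hj).2, sum_const, filter_filter,
    card_injective_image_eq (mem_filter.1 hT).2]

end Counting

section Clifford

theorem polar_Qf_s18 (x y : V × Module.Dual F V) :
    QuadraticMap.polar (Qf F V) x y = x.2 y.1 + y.2 x.1 := by
  change (x + y).2 (x + y).1 - x.2 x.1 - y.2 y.1 = _
  simp only [Prod.fst_add, Prod.snd_add, map_add, LinearMap.add_apply]
  ring

theorem isCAR_basis : IsCAR (fun i => ιv F V (bV i)) (fun i => ιd F V (bV.coord i)) where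
  anticomm_a i j := by
    simpa [ιv, polar_Qf_s18] using ι_mul_ι_add_swap (Q := Qf F V) (bV i, 0) (bV j, 0)
  anticomm_b i j := by
    simpa [ιd, polar_Qf_s18] using ι_mul_ι_add_swap (Q := Qf F V) (0, bV.coord i) (0, bV.coord j)
  anticomm_a_b i j := by
    have := ι_mul_ι_add_swap (Q := Qf F V) (bV i, 0) (0, bV.coord j)
    rw [polar_Qf_s18] at this
    split_ifs with hij <;> simp_all [ιv, ιd, Module.Basis.coord_apply]
  mul_self_a i := by
    have hQ : Qf F V (bV i, 0) = 0 :=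
      (LinearMap.zero_apply (bV i) : (0 : Module.Dual F V) (bV i) = 0)
    simp [ιv, hQ]

theorem Pel_eq_idempotentAtom :
    Pel F V bV = idempotentAtom (fun i => ιv F V (bV i) * ιd F V (bV.coord i)) ∅ := by
  simp [Pel, idempotentAtom]

theorem Pip_eq_sum_idempotentAtom [CharZero F] (p : ℕ) :
    Pip F V bV p =
      ∑ T with #T = p, idempotentAtom (fun i => ιv F V (bV i) * ιd F V (bV.coord i)) T := by
  have hstring (j : Fin p → Fin n) :
      (List.ofFn fun t => ιd F V (bV.coord (j t))).prod * Pel F V bV *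
          (List.ofFn fun t => ιv F V (bV (j t))).reverse.prod =
        if Function.Injective j then
          idempotentAtom (fun i => ιv F V (bV i) * ιd F V (bV.coord i)) (univ.image j)
        else 0 := by
    have := (isCAR_basis F V bV).prod_map_b_mul_idempotentAtom_mul_prod_map_a (List.ofFn j) ∅
    have himage : (List.ofFn j).toFinset = univ.image j := by ext; simp [List.mem_ofFn]
    simp only [List.map_ofFn, List.nodup_ofFn, notMem_empty, not_false_eq_true, implies_true,
      and_true, empty_union, himage] at this
    rwa [Pel_eq_idempotentAtom]
  rw [Pip, sum_congr rfl fun j _ => hstring j, sum_ite_injective_eq, ← Nat.cast_smul_eq_nsmul F,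
    inv_smul_smul₀ (Nat.cast_ne_zero.2 p.factorial_ne_zero)]

end Clifford

theorem OrthogonalIdempotents.sum_filter_mul_sum_filter {R I J : Type*} [Semiring R] [Fintype I]
    [DecidableEq J] {e : I → R} (he : OrthogonalIdempotents e) (g : I → J) (x y : J) :
    (∑ i with g i = x, e i) * (∑ i with g i = y, e i) =
      if x = y then ∑ i with g i = x, e i else 0 := by
  rw [sum_mul]
  split_ifs with hxy
  · subst hxy
    exact sum_congr rfl fun i hi => he.mul_sum_of_mem hi
  · refine sum_eq_zero fun i hi => he.mul_sum_of_notMem ?_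
    simp only [mem_filter, mem_univ, true_and] at hi ⊢
    exact hi ▸ hxy

/-- the `Π_p`, `0 ≤ p ≤ n`, form a complete orthogonal family of
idempotents: `Σ_{p=0}^n Π_p = 1` and `Π_p Π_q = δ_{pq} Π_p`. -/
theorem stmt18 [CharZero F] :
    (∑ p ∈ Finset.range (n + 1), Pip F V bV p = 1) ∧
    (∀ p q : ℕ, Pip F V bV p * Pip F V bV q =
      if p = q then Pip F V bV p else 0) := by
  have hatoms := completeOrthogonalIdempotents_idempotentAtom
    (isCAR_basis F V bV).commute_a_mul_b (isCAR_basis F V bV).isIdempotentElem_a_mul_b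
  simp only [Pip_eq_sum_idempotentAtom]
  refine ⟨?_, hatoms.toOrthogonalIdempotents.sum_filter_mul_sum_filter card⟩
  rw [sum_fiberwise_of_maps_to fun T _ =>
    mem_range.2 (Nat.lt_succ_of_le ((card_le_univ T).trans_eq (Fintype.card_fin n)))]
  exact hatoms.complete
end
end
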